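/- Let B_θ, B_z : (0,∞) → ℝ be C¹ with B_θ(r)² + B_z(r)² > 0 for all r, and let λ, α : (0,∞) → ℝ satisfy the ODE system dB_z/dr + α B_θ + λ B_z = 0 and dB_θ/dr + B_θ/r − α B_z + λ B_θ = 0. Define B = B_θ(r) e_θ + B_z(r) e_z and B_f⊥ = B_z(r) e_θ − B_θ(r) e_z on the region x²+y² > 0 of ℝ³. Then ∇×B_f⊥ = (α − 2B_θB_z/(r‖B‖²)) B_f⊥ + (−λ + (B_z² − B_θ²)/(r‖B‖²)) B, where ‖B‖² = B_θ(r)² + B_z(r)². -/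

import Mathlib

open RealInnerProductSpace

/-- The curl `∇×V = (∂₂V₃ − ∂₃V₂, ∂₃V₁ − ∂₁V₃, ∂₁V₂ − ∂₂V₁)` of a vector field on ℝ³. -/
noncomputable def curl3 (V : EuclideanSpace ℝ (Fin 3) → EuclideanSpace ℝ (Fin 3))
    (x : EuclideanSpace ℝ (Fin 3)) : EuclideanSpace ℝ (Fin 3) :=
  (EuclideanSpace.equiv (Fin 3) ℝ).symm
    ![fderiv ℝ V x (EuclideanSpace.single 1 1) 2 - fderiv ℝ V x (EuclideanSpace.single 2 1) 1,
      fderiv ℝ V x (EuclideanSpace.single 2 1) 0 - fderiv ℝ V x (EuclideanSpace.single 0 1) 2,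
      fderiv ℝ V x (EuclideanSpace.single 0 1) 1 - fderiv ℝ V x (EuclideanSpace.single 1 1) 0]

/-- The cylindrical radius `r = √(x² + y²)`. -/
noncomputable def rad (p : EuclideanSpace ℝ (Fin 3)) : ℝ := Real.sqrt (p 0 ^ 2 + p 1 ^ 2)

/-- The azimuthal unit vector `e_θ = (−y/r, x/r, 0)`. -/
noncomputable def etheta (p : EuclideanSpace ℝ (Fin 3)) : EuclideanSpace ℝ (Fin 3) :=
  (EuclideanSpace.equiv (Fin 3) ℝ).symm ![-(p 1) / rad p, p 0 / rad p, 0]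

/-- The vertical unit vector `e_z = (0,0,1)`. -/
noncomputable def ez3 : EuclideanSpace ℝ (Fin 3) := EuclideanSpace.single 2 1

/-!
The curl of an axisymmetric field `f(r) e_θ + g(r) e_z` is `−g'(r) e_θ + (f'(r) + f(r)/r) e_z`:
writing `e_θ = r⁻¹ (−y, x, 0)` turns this into a product-rule computation, the `f/r` term coming
from `∂ₓ(x/r) + ∂_y(y/r) = 1/r`. For `B_f⊥` (`f = B_z`, `g = −B_θ`) the ODE system expresses
`B_θ'` and `B_z' + B_z/r` through `α`, `λ`, `B_θ`, `B_z`, `r`, and matching the `e_θ` and `e_z`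
coefficients of both sides is an identity of rational functions, valid since `B_θ² + B_z² ≠ 0`.
-/

local notation "ℝ³" => EuclideanSpace ℝ (Fin 3)

/-- `(x, y, z) ↦ (−y, x, 0)` -/
noncomputable def rotXY : ℝ³ →L[ℝ] ℝ³ :=
  (EuclideanSpace.proj 0 : ℝ³ →L[ℝ] ℝ).smulRight (EuclideanSpace.single 1 1)
    - (EuclideanSpace.proj 1 : ℝ³ →L[ℝ] ℝ).smulRight (EuclideanSpace.single 0 1)

theorem etheta_eq_inv_rad_smul_rotXY (p : ℝ³) : etheta p = (rad p)⁻¹ • rotXY p := by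
  ext i
  fin_cases i <;> simp [etheta, rotXY, div_eq_inv_mul]

theorem hasFDerivAt_rad {p : ℝ³} (hp : 0 < p 0 ^ 2 + p 1 ^ 2) :
    HasFDerivAt rad ((rad p)⁻¹ •
      (p 0 • (EuclideanSpace.proj 0 : ℝ³ →L[ℝ] ℝ) + p 1 • EuclideanSpace.proj 1)) p := by
  have h := (((EuclideanSpace.proj (0 : Fin 3) : ℝ³ →L[ℝ] ℝ).hasFDerivAt.pow 2).add
    ((EuclideanSpace.proj (1 : Fin 3) : ℝ³ →L[ℝ] ℝ).hasFDerivAt.pow 2)).sqrt hp.ne'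
  refine h.congr_fderiv ?_
  ext v
  simp [rad, field]

theorem curl3_cylindrical {f g : ℝ → ℝ} {f' g' : ℝ} {p : ℝ³} (hp : 0 < p 0 ^ 2 + p 1 ^ 2)
    (hf : HasDerivAt f f' (rad p)) (hg : HasDerivAt g g' (rad p)) :
    curl3 (fun q => f (rad q) • etheta q + g (rad q) • ez3) p
      = (-g') • etheta p + (f' + f (rad p) / rad p) • ez3 := by
  have hr : 0 < rad p := Real.sqrt_pos.mpr hp
  have hfield : (fun q => f (rad q) • etheta q + g (rad q) • ez3)
      = fun q => (f (rad q) / rad q) • rotXY q + g (rad q) • ez3 := by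
    funext q
    rw [etheta_eq_inv_rad_smul_rotXY, smul_smul, div_eq_mul_inv]
  have hD : HasFDerivAt (fun q => (f (rad q) / rad q) • rotXY q + g (rad q) • ez3) _ p :=
    (((hf.div (hasDerivAt_id _) hr.ne').comp_hasFDerivAt p (hasFDerivAt_rad hp)).smul
      rotXY.hasFDerivAt).add ((hg.comp_hasFDerivAt p (hasFDerivAt_rad hp)).smul_const ez3)
  rw [hfield, curl3, hD.fderiv]
  have hr2 : rad p ^ 2 = p 0 ^ 2 + p 1 ^ 2 := Real.sq_sqrt hp.le
  ext i
  fin_cases i <;> simp [rotXY, etheta, ez3, div_eq_inv_mul]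
  field_simp
  linear_combination (f (rad p) - rad p * f') * hr2

/-- under the flux-rope ODE system (equivalent to `∇×B = λB_f⊥ + αB`),
`∇×B_f⊥ = (α − 2B_θB_z/(r‖B‖²)) B_f⊥ + (−λ + (B_z² − B_θ²)/(r‖B‖²)) B`
on the region `x² + y² > 0`, where `‖B‖² = B_θ(r)² + B_z(r)²`. -/
theorem stmt_14 (Bθ Bz Bθ' Bz' lam alp : ℝ → ℝ)
    (hBθ : ∀ r > (0:ℝ), HasDerivAt Bθ (Bθ' r) r)
    (hBz : ∀ r > (0:ℝ), HasDerivAt Bz (Bz' r) r)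
    (hpos : ∀ r > (0:ℝ), 0 < Bθ r ^ 2 + Bz r ^ 2)
    (hode1 : ∀ r > (0:ℝ), Bz' r + alp r * Bθ r + lam r * Bz r = 0)
    (hode2 : ∀ r > (0:ℝ), Bθ' r + Bθ r / r - alp r * Bz r + lam r * Bθ r = 0)
    (B Bf : EuclideanSpace ℝ (Fin 3) → EuclideanSpace ℝ (Fin 3))
    (hB : ∀ p, B p = Bθ (rad p) • etheta p + Bz (rad p) • ez3)
    (hBf : ∀ p, Bf p = Bz (rad p) • etheta p - Bθ (rad p) • ez3) :
    ∀ p : EuclideanSpace ℝ (Fin 3), 0 < p 0 ^ 2 + p 1 ^ 2 →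
      curl3 Bf p =
        (alp (rad p) - 2 * Bθ (rad p) * Bz (rad p) /
            (rad p * (Bθ (rad p) ^ 2 + Bz (rad p) ^ 2))) • Bf p
        + (-lam (rad p) + (Bz (rad p) ^ 2 - Bθ (rad p) ^ 2) /
            (rad p * (Bθ (rad p) ^ 2 + Bz (rad p) ^ 2))) • B p := by
  intro p hp
  set r := rad p
  have hr : 0 < r := Real.sqrt_pos.mpr hp
  have hN := hpos r hr
  have hBf_cyl : Bf = fun q => Bz (rad q) • etheta q + (-Bθ) (rad q) • ez3 := by
    funext q
    rw [hBf, Pi.neg_apply, neg_smul, sub_eq_add_neg]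
  have hcurl : curl3 Bf p = Bθ' r • etheta p + (Bz' r + Bz r / r) • ez3 := by
    rw [hBf_cyl, curl3_cylindrical hp (hBz r hr) (hBθ r hr).neg, neg_neg]
  have hθ : Bθ' r = (alp r - 2 * Bθ r * Bz r / (r * (Bθ r ^ 2 + Bz r ^ 2))) * Bz r
      + (-lam r + (Bz r ^ 2 - Bθ r ^ 2) / (r * (Bθ r ^ 2 + Bz r ^ 2))) * Bθ r := by
    have h := hode2 r hr
    field_simp at h ⊢
    linear_combination (Bθ r ^ 2 + Bz r ^ 2) * h
  have hz : Bz' r + Bz r / r = -(alp r - 2 * Bθ r * Bz r / (r * (Bθ r ^ 2 + Bz r ^ 2))) * Bθ r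
      + (-lam r + (Bz r ^ 2 - Bθ r ^ 2) / (r * (Bθ r ^ 2 + Bz r ^ 2))) * Bz r := by
    field_simp
    linear_combination (r * (Bθ r ^ 2 + Bz r ^ 2)) * hode1 r hr
  rw [hcurl, hB, hBf, hθ, hz]
  module
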